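/- Let S ∈ ℝ^N and k ∈ {1, …, N}. If there exist 0 ≤ t₀ < t₁ such that Φ_k(t) = 0 for all t ∈ (t₀, t₁), then ⟨S, v^n⟩ v^n_k = 0 for all n = 1, …, N (and hence Φ_k is identically zero on ℝ). -/

import Mathlib

open Matrix Set

/-- `Φ_k(t) = ⟨S, v¹⟩ t v¹_k + Σ_{n=2}^N (⟨S, vⁿ⟩/ω_n) sin(ω_n t) vⁿ_k`. -/
noncomputable def Phi {N : ℕ} (hN : 2 ≤ N) (ω : Fin N → ℝ) (v : Fin N → Fin N → ℝ)
    (S : Fin N → ℝ) (k : Fin N) (t : ℝ) : ℝ :=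
  (S ⬝ᵥ v ⟨0, by omega⟩) * t * v ⟨0, by omega⟩ k
    + ∑ n ∈ Finset.univ.filter (fun n : Fin N => n ≠ ⟨0, by omega⟩),
        (S ⬝ᵥ v n) / ω n * Real.sin (ω n * t) * v n k

/-! Writing `uₙ(t) = sin(ωₙ t)/ωₙ` (and `u₁(t) = t`), we have `Φ_k = Σ cₙ uₙ` with
`cₙ = ⟨S, vⁿ⟩ vⁿ_k` and `uₙ'' = -ωₙ² uₙ`. If `Φ_k` vanishes on an open interval, so do all its
derivatives, and at a point `τ` of the interval the even and odd derivatives give Vandermonde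
systems in the distinct nodes `-ωₙ²` for the vectors `(cₙ uₙ(τ))` and `(cₙ uₙ'(τ))`. Both vanish,
and `uₙ(τ)`, `uₙ'(τ)` cannot vanish together since `ωₙ² uₙ² + uₙ'² = 1`. -/

open Real Function

lemma eqOn_zero_of_hasDerivAt_of_eqOn_zero {f f' : ℝ → ℝ} {U : Set ℝ} (hU : IsOpen U)
    (hf : ∀ t ∈ U, HasDerivAt f (f' t) t) (h : EqOn f 0 U) : EqOn f' 0 U := fun t ht =>
  (hf t ht).unique <|
    (hasDerivAt_const t 0).congr_of_eventuallyEq (Filter.eventuallyEq_of_mem (hU.mem_nhds ht) h)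

lemma eqOn_sum_mul_eq_zero_of_hasDerivAt {ι : Type*} [Fintype ι] {U : Set ℝ} (hU : IsOpen U)
    {u w : ι → ℝ → ℝ} (hu : ∀ j t, HasDerivAt (u j) (w j t) t) {c : ι → ℝ}
    (h : EqOn (fun t => ∑ j, c j * u j t) 0 U) : EqOn (fun t => ∑ j, c j * w j t) 0 U :=
  eqOn_zero_of_hasDerivAt_of_eqOn_zero hU
    (fun t _ => HasDerivAt.fun_sum fun j _ => (hu j t).const_mul (c j)) h

section SecondOrder

variable {n : ℕ} {U : Set ℝ} {u u' : Fin n → ℝ → ℝ} {μ : Fin n → ℝ}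

lemma eqOn_sum_mul_pow_mul_eq_zero (hU : IsOpen U) (hu : ∀ j t, HasDerivAt (u j) (u' j t) t)
    (hu' : ∀ j t, HasDerivAt (u' j) (μ j * u j t) t) {c : Fin n → ℝ}
    (h : EqOn (fun t => ∑ j, c j * u j t) 0 U) (i : ℕ) :
    EqOn (fun t => ∑ j, c j * μ j ^ i * u j t) 0 U := by
  induction i with
  | zero => simpa using h
  | succ i ih =>
    have h' := eqOn_sum_mul_eq_zero_of_hasDerivAt hU hu'
      (eqOn_sum_mul_eq_zero_of_hasDerivAt hU hu ih)
    exact fun t ht => (Finset.sum_congr rfl fun j _ => by ring).trans (h' ht)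

theorem mul_eq_zero_of_eqOn_sum_mul_eq_zero (hU : IsOpen U)
    (hu : ∀ j t, HasDerivAt (u j) (u' j t) t) (hu' : ∀ j t, HasDerivAt (u' j) (μ j * u j t) t)
    (hμ : Injective μ) {c : Fin n → ℝ} (h : EqOn (fun t => ∑ j, c j * u j t) 0 U)
    {t : ℝ} (ht : t ∈ U) (j : Fin n) : c j * u j t = 0 ∧ c j * u' j t = 0 := by
  have hval : (fun j => c j * u j t) = 0 :=
    eq_zero_of_forall_pow_sum_mul_pow_eq_zero hμ fun i =>
      (Finset.sum_congr rfl fun j _ => by ring).trans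
        (eqOn_sum_mul_pow_mul_eq_zero hU hu hu' h i ht)
  have hder : (fun j => c j * u' j t) = 0 :=
    eq_zero_of_forall_pow_sum_mul_pow_eq_zero hμ fun i =>
      (Finset.sum_congr rfl fun j _ => by ring).trans
        (eqOn_sum_mul_eq_zero_of_hasDerivAt hU hu (eqOn_sum_mul_pow_mul_eq_zero hU hu hu' h i) ht)
  exact ⟨congrFun hval j, congrFun hder j⟩

end SecondOrder

noncomputable def sinDivFreq (ω t : ℝ) : ℝ := if ω = 0 then t else sin (ω * t) / ω

lemma hasDerivAt_sinDivFreq (ω t : ℝ) : HasDerivAt (sinDivFreq ω) (cos (ω * t)) t := by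
  unfold sinDivFreq
  split_ifs with hω
  · simpa [hω] using hasDerivAt_id' t
  · simpa [hω] using ((hasDerivAt_id' t).const_mul ω).sin.div_const ω

lemma hasDerivAt_cos_mul (ω t : ℝ) :
    HasDerivAt (fun t => cos (ω * t)) (-ω ^ 2 * sinDivFreq ω t) t := by
  have := ((hasDerivAt_id' t).const_mul ω).cos
  unfold sinDivFreq
  split_ifs with hω
  · simpa [hω] using this
  · convert this using 1
    field_simp

lemma sq_mul_sinDivFreq_sq_add_cos_sq (ω t : ℝ) :
    ω ^ 2 * sinDivFreq ω t ^ 2 + cos (ω * t) ^ 2 = 1 := by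
  unfold sinDivFreq
  split_ifs with hω
  · simp [hω]
  · field_simp
    simp [sin_sq_add_cos_sq]

lemma eq_zero_of_mul_sinDivFreq_eq_zero_of_mul_cos_eq_zero {ω t c : ℝ}
    (h₁ : c * sinDivFreq ω t = 0) (h₂ : c * cos (ω * t) = 0) : c = 0 := by
  linear_combination (ω ^ 2 * sinDivFreq ω t) * h₁ + cos (ω * t) * h₂
    - c * sq_mul_sinDivFreq_sq_add_cos_sq ω t

theorem eq_zero_of_eqOn_sum_mul_sinDivFreq {n : ℕ} {ω c : Fin n → ℝ}
    (hω : Injective fun j => ω j ^ 2) {U : Set ℝ} (hU : IsOpen U) (hne : U.Nonempty)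
    (h : EqOn (fun t => ∑ j, c j * sinDivFreq (ω j) t) 0 U) : c = 0 := by
  obtain ⟨τ, hτ⟩ := hne
  funext j
  obtain ⟨h₁, h₂⟩ := mul_eq_zero_of_eqOn_sum_mul_eq_zero hU
    (fun j => hasDerivAt_sinDivFreq (ω j)) (fun j => hasDerivAt_cos_mul (ω j))
    (neg_injective.comp hω) h hτ j
  exact eq_zero_of_mul_sinDivFreq_eq_zero_of_mul_cos_eq_zero h₁ h₂

lemma Phi_eq_sum_mul_sinDivFreq {N : ℕ} (hN : 2 ≤ N) {ω : Fin N → ℝ}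
    (hω0 : ω ⟨0, by omega⟩ = 0) (hω : ∀ n, n ≠ ⟨0, by omega⟩ → ω n ≠ 0)
    (v : Fin N → Fin N → ℝ) (S : Fin N → ℝ) (k : Fin N) :
    Phi hN ω v S k = fun t => ∑ n, (S ⬝ᵥ v n) * v n k * sinDivFreq (ω n) t := by
  funext t
  rw [← Finset.add_sum_erase _ _ (Finset.mem_univ ⟨0, by omega⟩), ← Finset.filter_ne']
  unfold Phi
  congr 1
  · simp only [sinDivFreq, hω0, if_true]
    ring
  · refine Finset.sum_congr rfl fun n hn => ?_
    simp only [sinDivFreq, hω n (Finset.mem_filter.1 hn).2, if_false]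
    ring

lemma StrictMono.injective_sq {N : ℕ} {ω : Fin N → ℝ} (hω : StrictMono ω) (hN : 0 < N)
    (h₀ : 0 ≤ ω ⟨0, hN⟩) : Injective fun n => ω n ^ 2 := fun m n h =>
  have hnonneg (n : Fin N) : 0 ≤ ω n := h₀.trans (hω.monotone (Nat.zero_le n))
  hω.injective ((sq_eq_sq₀ (hnonneg m) (hnonneg n)).1 h)

/-- If `Φ_k` vanishes on some nonempty interval `(t₀, t₁) ⊆ [0, ∞)`, then all its coefficients
`⟨S, vⁿ⟩ vⁿ_k` vanish, and hence `Φ_k ≡ 0` on `ℝ`. -/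
theorem Phi_vanishing_interval
    {N : ℕ} (hN : 2 ≤ N)
    (ω : Fin N → ℝ) (v : Fin N → Fin N → ℝ)
    (hω0 : ω ⟨0, by omega⟩ = 0) (hωmono : StrictMono ω)
    (S : Fin N → ℝ) (k : Fin N)
    (t₀ t₁ : ℝ) (ht : t₀ < t₁)
    (hvanish : ∀ t ∈ Ioo t₀ t₁, Phi hN ω v S k t = 0) :
    (∀ n : Fin N, (S ⬝ᵥ v n) * v n k = 0) ∧ ∀ t : ℝ, Phi hN ω v S k t = 0 := by
  have hω : ∀ n, n ≠ ⟨0, by omega⟩ → ω n ≠ 0 := fun n hn => by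
    have h : ω ⟨0, by omega⟩ < ω n :=
      hωmono (Fin.lt_def.2 (Nat.pos_of_ne_zero fun h => hn (Fin.ext h)))
    exact (hω0 ▸ h).ne'
  have hPhi := Phi_eq_sum_mul_sinDivFreq hN hω0 hω v S k
  have hc : (fun n => (S ⬝ᵥ v n) * v n k) = 0 :=
    eq_zero_of_eqOn_sum_mul_sinDivFreq (hωmono.injective_sq (by omega) hω0.ge) isOpen_Ioo
      (nonempty_Ioo.2 ht) (hPhi ▸ hvanish)
  refine ⟨fun n => congrFun hc n, fun t => ?_⟩
  simp [hPhi, fun n => congrFun hc n]
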